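/- Sideways diamond: if X →[θ₁] X₁ ⇝[θ₂] Y is a trace in the proved LTS for CCSK (one forward then one backward transition) with θ₁ ⌣ θ₂, then there exists a process X₂ such that X ⇝[θ₂] X₂ →[θ₁] Y. -/

import Mathlib

namespace CCSK

/-- Labels: names, co-names, and the silent action τ. -/
inductive Lab : Type
  | name : ℕ → Lab
  | coname : ℕ → Lab
  | tau : Lab
deriving DecidableEq

/-- Complement of a label. -/
def Lab.co : Lab → Lab
  | .name n => .coname n
  | .coname n => .name n
  | .tau => .tau

abbrev Key := ℕ

/-- CCSK processes (with a replication operator for the extended calculus). -/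
inductive Proc : Type
  | nil : Proc
  | pre : Lab → Proc → Proc          -- α.X
  | kpre : Lab → Key → Proc → Proc   -- α[k].X
  | par : Proc → Proc → Proc
  | sum : Proc → Proc → Proc
  | res : Proc → ℕ → Proc            -- X \ a
  | repl : Proc → Proc               -- !X
deriving DecidableEq

/-- Keys occurring in a process. -/
def Proc.keys : Proc → Set Key
  | .nil => ∅
  | .pre _ X => X.keys
  | .kpre _ k X => insert k X.keys
  | .par X Y => X.keys ∪ Y.keys
  | .sum X Y => X.keys ∪ Y.keys
  | .res X _ => X.keys
  | .repl X => X.keys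

/-- A process is standard when it contains no keys. -/
def Proc.std (X : Proc) : Prop := X.keys = ∅

/-- Multiset of keyed-prefix occurrences (label, key). -/
def Proc.keyed : Proc → Multiset (Lab × Key)
  | .nil => 0
  | .pre _ X => X.keyed
  | .kpre a k X => (a, k) ::ₘ X.keyed
  | .par X Y => X.keyed + Y.keyed
  | .sum X Y => X.keyed + Y.keyed
  | .res X _ => X.keyed
  | .repl X => X.keyed

/-- Enhanced keyed labels. -/
inductive ELab : Type
  | base : Lab → Key → ELab          -- α[k]
  | parL : ELab → ELab               -- |_L θ
  | parR : ELab → ELab               -- |_R θ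
  | bang : ELab → ELab               -- !θ (replication)
  | syn : ELab → ELab → ELab         -- ⟨θ_L, θ_R⟩
deriving DecidableEq

/-- Underlying action label ℓ(θ). -/
def ELab.act : ELab → Lab
  | .base a _ => a
  | .parL θ => θ.act
  | .parR θ => θ.act
  | .bang θ => θ.act
  | .syn _ _ => .tau

/-- Key of an enhanced keyed label. -/
def ELab.key : ELab → Key
  | .base _ k => k
  | .parL θ => θ.key
  | .parR θ => θ.key
  | .bang θ => θ.key
  | .syn θ _ => θ.key

/-- Dependency relation ⋖ on enhanced keyed labels (including the extension
for replication labels). -/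
inductive Dep : ELab → ELab → Prop
  | base (a : Lab) (k : Key) (θ : ELab) : Dep (.base a k) θ
  | parL {θ θ'} : Dep θ θ' → Dep (.parL θ) (.parL θ')
  | parR {θ θ'} : Dep θ θ' → Dep (.parR θ) (.parR θ')
  | synSrcL {θL θR θ} : Dep θL θ → Dep (.syn θL θR) θ
  | synSrcR {θL θR θ} : Dep θR θ → Dep (.syn θL θR) θ
  | synTgtL {θ θL θR} : Dep θ θL → Dep θ (.syn θL θR)
  | synTgtR {θ θL θR} : Dep θ θR → Dep θ (.syn θL θR)
  | synSynL {θL θR θL' θR'} : Dep θL θL' → Dep (.syn θL θR) (.syn θL' θR')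
  | synSynR {θL θR θL' θR'} : Dep θR θR' → Dep (.syn θL θR) (.syn θL' θR')
  | bangBang (θ : ELab) : Dep (.bang θ) (.bang θ)
  | bangParL (θ θ' : ELab) : Dep (.bang θ) (.parL θ')
  | bangParRSynL (θL θR θ'' : ELab) : Dep (.bang (.syn θL θR)) (.parR (.parL θ''))
  | bangParRSynR (θL θR θ'' : ELab) : Dep (.bang (.syn θL θR)) (.parR (.parR θ''))
  | bangParR {θ θ' : ELab} : Dep θ θ' → Dep (.bang θ) (.parR θ')

/-- Concurrency of labels: no dependency in either direction. -/
def Conc (θ₁ θ₂ : ELab) : Prop := ¬ Dep θ₁ θ₂ ∧ ¬ Dep θ₂ θ₁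

/-- The proved forward LTS for CCSK (without replication rules). -/
inductive Fwd : Proc → ELab → Proc → Prop
  | act {a k X} : Proc.std X → Fwd (.pre a X) (.base a k) (.kpre a k X)
  | pre {a : Lab} {k : Key} {X X' : Proc} {θ : ELab} : Fwd X θ X' → θ.key ≠ k →
      Fwd (.kpre a k X) θ (.kpre a k X')
  | res {X X' : Proc} {θ : ELab} {a : ℕ} : Fwd X θ X' → θ.act ≠ .name a → θ.act ≠ .coname a →
      Fwd (X.res a) θ (X'.res a)
  | parL {X X' Y : Proc} {θ : ELab} : Fwd X θ X' → θ.key ∉ Y.keys →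
      Fwd (X.par Y) (.parL θ) (X'.par Y)
  | parR {Y Y' X : Proc} {θ : ELab} : Fwd Y θ Y' → θ.key ∉ X.keys →
      Fwd (X.par Y) (.parR θ) (X.par Y')
  | syn {X X' Y Y' : Proc} {θ₁ θ₂ : ELab} : Fwd X θ₁ X' → Fwd Y θ₂ Y' →
      θ₁.act ≠ .tau → θ₂.act = θ₁.act.co → θ₂.key = θ₁.key →
      Fwd (X.par Y) (.syn (.parL θ₁) (.parR θ₂)) (X'.par Y')
  | sumL {X θ X' Y} : Fwd X θ X' → Proc.std Y → Fwd (X.sum Y) θ (X'.sum Y)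
  | sumR {Y θ Y' X} : Fwd Y θ Y' → Proc.std X → Fwd (X.sum Y) θ (X.sum Y')

/-- The proved backward LTS for CCSK (exact symmetric of the forward one).
`Bwd X θ Y` means `X ⇝[θ] Y`. -/
inductive Bwd : Proc → ELab → Proc → Prop
  | act {a k X} : Proc.std X → Bwd (.kpre a k X) (.base a k) (.pre a X)
  | pre {a : Lab} {k : Key} {X' X : Proc} {θ : ELab} : Bwd X' θ X → θ.key ≠ k →
      Bwd (.kpre a k X') θ (.kpre a k X)
  | res {X' X : Proc} {θ : ELab} {a : ℕ} : Bwd X' θ X → θ.act ≠ .name a → θ.act ≠ .coname a →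
      Bwd (X'.res a) θ (X.res a)
  | parL {X' X Y : Proc} {θ : ELab} : Bwd X' θ X → θ.key ∉ Y.keys →
      Bwd (X'.par Y) (.parL θ) (X.par Y)
  | parR {Y' Y X : Proc} {θ : ELab} : Bwd Y' θ Y → θ.key ∉ X.keys →
      Bwd (X.par Y') (.parR θ) (X.par Y)
  | syn {X' X Y' Y : Proc} {θ₁ θ₂ : ELab} : Bwd X' θ₁ X → Bwd Y' θ₂ Y →
      θ₁.act ≠ .tau → θ₂.act = θ₁.act.co → θ₂.key = θ₁.key →
      Bwd (X'.par Y') (.syn (.parL θ₁) (.parR θ₂)) (X.par Y)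
  | sumL {X' θ X Y} : Bwd X' θ X → Proc.std Y → Bwd (X'.sum Y) θ (X.sum Y)
  | sumR {Y' θ Y X} : Bwd Y' θ Y → Proc.std X → Bwd (X.sum Y') θ (X.sum Y)

/-- Combined LTS: `Step true` is forward, `Step false` is backward. -/
def Step : Bool → Proc → ELab → Proc → Prop
  | true => Fwd
  | false => Bwd

/-- Reachability: connected to a standard process by forward/backward moves. -/
def Reachable (X : Proc) : Prop :=
  ∃ X₀ : Proc, X₀.std ∧
    Relation.ReflTransGen (fun A B => ∃ d θ, Step d A θ B) X₀ X

/-- The proved forward LTS for CCSK extended with replication. -/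
inductive FwdR : Proc → ELab → Proc → Prop
  | act {a k X} : Proc.std X → FwdR (.pre a X) (.base a k) (.kpre a k X)
  | pre {a : Lab} {k : Key} {X X' : Proc} {θ : ELab} : FwdR X θ X' → θ.key ≠ k →
      FwdR (.kpre a k X) θ (.kpre a k X')
  | res {X X' : Proc} {θ : ELab} {a : ℕ} : FwdR X θ X' → θ.act ≠ .name a → θ.act ≠ .coname a →
      FwdR (X.res a) θ (X'.res a)
  | parL {X X' Y : Proc} {θ : ELab} : FwdR X θ X' → θ.key ∉ Y.keys →
      FwdR (X.par Y) (.parL θ) (X'.par Y)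
  | parR {Y Y' X : Proc} {θ : ELab} : FwdR Y θ Y' → θ.key ∉ X.keys →
      FwdR (X.par Y) (.parR θ) (X.par Y')
  | syn {X X' Y Y' : Proc} {θ₁ θ₂ : ELab} : FwdR X θ₁ X' → FwdR Y θ₂ Y' →
      θ₁.act ≠ .tau → θ₂.act = θ₁.act.co → θ₂.key = θ₁.key →
      FwdR (X.par Y) (.syn (.parL θ₁) (.parR θ₂)) (X'.par Y')
  | sumL {X θ X' Y} : FwdR X θ X' → Proc.std Y → FwdR (X.sum Y) θ (X'.sum Y)
  | sumR {Y θ Y' X} : FwdR Y θ Y' → Proc.std X → FwdR (X.sum Y) θ (X.sum Y')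
  | repl1 {X X' : Proc} {θ : ELab} : FwdR X θ X' →
      FwdR (.repl X) (.bang θ) ((Proc.repl X).par X')
  | repl2 {X X' X'' : Proc} {θ₁ θ₂ : ELab} : FwdR X θ₁ X' → FwdR X θ₂ X'' →
      θ₁.act ≠ .tau → θ₂.act = θ₁.act.co → θ₂.key = θ₁.key →
      FwdR (.repl X) (.bang (.syn (.parL θ₁) (.parR θ₂)))
        ((Proc.repl X).par (X'.par X''))

/-- The proved backward LTS for CCSK extended with replication. -/
inductive BwdR : Proc → ELab → Proc → Prop
  | act {a k X} : Proc.std X → BwdR (.kpre a k X) (.base a k) (.pre a X)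
  | pre {a : Lab} {k : Key} {X' X : Proc} {θ : ELab} : BwdR X' θ X → θ.key ≠ k →
      BwdR (.kpre a k X') θ (.kpre a k X)
  | res {X' X : Proc} {θ : ELab} {a : ℕ} : BwdR X' θ X → θ.act ≠ .name a → θ.act ≠ .coname a →
      BwdR (X'.res a) θ (X.res a)
  | parL {X' X Y : Proc} {θ : ELab} : BwdR X' θ X → θ.key ∉ Y.keys →
      BwdR (X'.par Y) (.parL θ) (X.par Y)
  | parR {Y' Y X : Proc} {θ : ELab} : BwdR Y' θ Y → θ.key ∉ X.keys →
      BwdR (X.par Y') (.parR θ) (X.par Y)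
  | syn {X' X Y' Y : Proc} {θ₁ θ₂ : ELab} : BwdR X' θ₁ X → BwdR Y' θ₂ Y →
      θ₁.act ≠ .tau → θ₂.act = θ₁.act.co → θ₂.key = θ₁.key →
      BwdR (X'.par Y') (.syn (.parL θ₁) (.parR θ₂)) (X.par Y)
  | sumL {X' θ X Y} : BwdR X' θ X → Proc.std Y → BwdR (X'.sum Y) θ (X.sum Y)
  | sumR {Y' θ Y X} : BwdR Y' θ Y → Proc.std X → BwdR (X.sum Y') θ (X.sum Y)
  | repl1 {X' X : Proc} {θ : ELab} : BwdR X' θ X →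
      BwdR ((Proc.repl X).par X') (.bang θ) (.repl X)
  | repl2 {X' X'' X : Proc} {θ₁ θ₂ : ELab} : BwdR X' θ₁ X → BwdR X'' θ₂ X →
      θ₁.act ≠ .tau → θ₂.act = θ₁.act.co → θ₂.key = θ₁.key →
      BwdR ((Proc.repl X).par (X'.par X''))
        (.bang (.syn (.parL θ₁) (.parR θ₂))) (.repl X)

/-- Combined extended LTS. -/
def StepR : Bool → Proc → ELab → Proc → Prop
  | true => FwdR
  | false => BwdR

/-- Reachability in the extended calculus. -/
def ReachableR (X : Proc) : Prop :=
  ∃ X₀ : Proc, X₀.std ∧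
    Relation.ReflTransGen (fun A B => ∃ d θ, StepR d A θ B) X₀ X

/-- Traces: sequences of composable (forward or backward) transitions. -/
inductive Trace : Proc → Proc → Type
  | nil (X : Proc) : Trace X X
  | cons {X Y Z : Proc} (d : Bool) (θ : ELab) (s : Step d X θ Y)
      (T : Trace Y Z) : Trace X Z

/-- Composition of traces. -/
def Trace.comp : {X Y Z : Proc} → Trace X Y → Trace Y Z → Trace X Z
  | _, _, _, .nil _, U => U
  | _, _, _, .cons d θ s T, U => .cons d θ s (Trace.comp T U)

/-- Length of a trace. -/
def Trace.length : {X Y : Proc} → Trace X Y → ℕ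
  | _, _, .nil _ => 0
  | _, _, .cons _ _ _ T => Trace.length T + 1

/-- All transitions of a trace have direction `d`. -/
def Trace.AllDir (d : Bool) : {X Y : Proc} → Trace X Y → Prop
  | _, _, .nil _ => True
  | _, _, .cons d' _ _ T => d' = d ∧ Trace.AllDir d T

/-- Causal equivalence of traces: the least equivalence relation, closed under
composition, cancelling a transition followed by its reverse, and swapping the
two sides of a concurrency square. -/
inductive CEq : {X Y : Proc} → Trace X Y → Trace X Y → Prop
  | refl {X Y} (T : Trace X Y) : CEq T T
  | symm {X Y} {T T' : Trace X Y} : CEq T T' → CEq T' T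
  | trans {X Y} {T T' T'' : Trace X Y} : CEq T T' → CEq T' T'' → CEq T T''
  | congr {X Y Z : Proc} {d θ} (s : Step d X θ Y) {T T' : Trace Y Z} :
      CEq T T' → CEq (Trace.cons d θ s T) (Trace.cons d θ s T')
  | cancel {X Y Z : Proc} {d θ} (s : Step d X θ Y) (s' : Step (!d) Y θ X)
      (T : Trace X Z) :
      CEq (Trace.cons d θ s (Trace.cons (!d) θ s' T)) T
  | square {X X₁ X₂ Y Z : Proc} {d₁ d₂ θ₁ θ₂}
      (s₁ : Step d₁ X θ₁ X₁) (t₂ : Step d₂ X₁ θ₂ Y)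
      (s₂ : Step d₂ X θ₂ X₂) (t₁ : Step d₁ X₂ θ₁ Y)
      (hc : Conc θ₁ θ₂) (T : Trace Y Z) :
      CEq (Trace.cons d₁ θ₁ s₁ (Trace.cons d₂ θ₂ t₂ T))
          (Trace.cons d₂ θ₂ s₂ (Trace.cons d₁ θ₁ t₁ T))

/-- Removal of the keyed prefix α[k]. -/
def remP (a : Lab) (k : Key) : Proc → Proc
  | .nil => .nil
  | .pre b X => .pre b X
  | .kpre b m X => if b = a ∧ m = k then X else .kpre b m (remP a k X)
  | .par X Y => .par (remP a k X) (remP a k Y)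
  | .sum X Y => .sum (remP a k X) (remP a k Y)
  | .res X n => .res (remP a k X) n
  | .repl X => .repl (remP a k X)

/-- rem_k^α : remove α[k] and its complement (only α[k] when α = τ). -/
def remK (a : Lab) (k : Key) (X : Proc) : Proc :=
  if a = Lab.tau then remP a k X else remP a k (remP a.co k X)

/-- Left projection of enhanced keyed labels (partial). -/
def projL : ELab → Option ELab
  | .parL θ => some θ
  | .syn (.parL θL) _ => some θL
  | _ => none

/-- Right projection of enhanced keyed labels (partial). -/
def projR : ELab → Option ELab
  | .parR θ => some θ
  | .syn _ (.parR θR) => some θR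
  | _ => none

/-- Projection selector: `true` is left, `false` is right. -/
def eproj : Bool → ELab → Option ELab
  | true => projL
  | false => projR

/-- Component selector for parallel processes. -/
def side (b : Bool) (L R : Proc) : Proc := if b then L else R

/-- Labels of the shapes arising from a parallel composition. -/
def ParShape (θ : ELab) : Prop :=
  (∃ φ, θ = ELab.parL φ) ∨ (∃ φ, θ = ELab.parR φ) ∨
    ∃ φ ψ, θ = ELab.syn (ELab.parL φ) (ELab.parR ψ)

/-- The collapsing function σ identifying ! and |_R prefixes. -/
def collapse : ELab → ELab
  | .base a k => .base a k
  | .parL θ => .parL (collapse θ)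
  | .parR θ => .parR (collapse θ)
  | .bang θ => .parR (collapse θ)
  | .syn θ₁ θ₂ => .syn (collapse θ₁) (collapse θ₂)

/-- Sub-term relation: strips sums, restrictions and executed keyed prefixes.
`Strip X Y` means X is a sub-term of Y. -/
inductive Strip : Proc → Proc → Prop
  | refl (X : Proc) : Strip X X
  | sumL {X Y Z : Proc} : Strip X Y → Strip X (Y.sum Z)
  | sumR {X Y Z : Proc} : Strip X Y → Strip X (Z.sum Y)
  | res {X Y : Proc} {a : ℕ} : Strip X Y → Strip X (Y.res a)
  | kpre {X Y : Proc} {a : Lab} {k : Key} : Strip X Y → Strip X (.kpre a k Y)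

/-- A forward transition of the proved LTS, as an object. -/
structure FTrans where
  src : Proc
  lab : ELab
  tgt : Proc
  ok : Fwd src lab tgt

/-- A backward transition of the proved LTS, as an object. -/
structure BTrans where
  src : Proc
  lab : ELab
  tgt : Proc
  ok : Bwd src lab tgt

end CCSK

/-!
Induction on the forward transition, inverting the backward one. A label `α[k]` depends on every
label, so concurrency rules out the backward move undoing the forward one and descends to the
components of parallel and synchronised labels. Moves in different parallel components commute
outright: a move adds or removes only its own key, so the key side conditions survive the swap.
-/

namespace CCSK

theorem Fwd.keys_eq {X X' : Proc} {θ : ELab} (h : Fwd X θ X') :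
    X'.keys = insert θ.key X.keys := by
  induction h with
  | act => simp [Proc.keys, ELab.key]
  | pre _ _ ih => simp only [Proc.keys, ih]; exact Set.insert_comm _ _ _
  | res _ _ _ ih => simpa [Proc.keys] using ih
  | parL _ _ ih => simp [Proc.keys, ELab.key, ih, Set.insert_union]
  | parR _ _ ih => simp [Proc.keys, ELab.key, ih, Set.union_insert]
  | syn _ _ _ _ hkey ih₁ ih₂ =>
      simp only [Proc.keys, ELab.key, ih₁, ih₂, hkey]
      ext; simp; tauto
  | sumL _ _ ih => simp [Proc.keys, ih, Set.insert_union]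
  | sumR _ _ ih => simp [Proc.keys, ih, Set.union_insert]

theorem Fwd.of_bwd {X Y : Proc} {θ : ELab} (h : Bwd X θ Y) : Fwd Y θ X := by
  induction h with
  | act hX => exact .act hX
  | pre _ hk ih => exact ih.pre hk
  | res _ h₁ h₂ ih => exact ih.res h₁ h₂
  | parL _ hk ih => exact ih.parL hk
  | parR _ hk ih => exact ih.parR hk
  | syn _ _ ha hco hkey ih₁ ih₂ => exact .syn ih₁ ih₂ ha hco hkey
  | sumL _ hs ih => exact ih.sumL hs
  | sumR _ hs ih => exact ih.sumR hs

theorem Fwd.keys_subset {X X' : Proc} {θ : ELab} (h : Fwd X θ X') : X.keys ⊆ X'.keys := by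
  rw [h.keys_eq]; exact Set.subset_insert _ _

theorem Fwd.not_std_tgt {X X' : Proc} {θ : ELab} (h : Fwd X θ X') : ¬ X'.std := by
  intro hs
  have hmem : θ.key ∈ X'.keys := by rw [h.keys_eq]; exact Set.mem_insert _ _
  rw [hs] at hmem
  exact hmem

theorem Bwd.keys_subset {X Y : Proc} {θ : ELab} (h : Bwd X θ Y) : Y.keys ⊆ X.keys :=
  (Fwd.of_bwd h).keys_subset

theorem Bwd.not_std_src {X Y : Proc} {θ : ELab} (h : Bwd X θ Y) : ¬ X.std :=
  (Fwd.of_bwd h).not_std_tgt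

namespace Conc

variable {θ θ' φ φ' ψ ψ' : ELab}

theorem symm (h : Conc θ θ') : Conc θ' θ := ⟨h.2, h.1⟩

theorem of_parL (h : Conc (.parL θ) (.parL θ')) : Conc θ θ' :=
  ⟨fun d => h.1 d.parL, fun d => h.2 d.parL⟩

theorem of_parR (h : Conc (.parR θ) (.parR θ')) : Conc θ θ' :=
  ⟨fun d => h.1 d.parR, fun d => h.2 d.parR⟩

theorem of_parL_syn (h : Conc (.parL θ) (.syn (.parL φ) ψ)) : Conc θ φ :=
  ⟨fun d => h.1 (.synTgtL d.parL), fun d => h.2 (.synSrcL d.parL)⟩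

theorem of_parR_syn (h : Conc (.parR θ) (.syn φ (.parR ψ))) : Conc θ ψ :=
  ⟨fun d => h.1 (.synTgtR d.parR), fun d => h.2 (.synSrcR d.parR)⟩

theorem of_syn_left (h : Conc (.syn (.parL φ) ψ) (.syn (.parL φ') ψ')) : Conc φ φ' :=
  ⟨fun d => h.1 (.synSynL d.parL), fun d => h.2 (.synSynL d.parL)⟩

theorem of_syn_right (h : Conc (.syn φ (.parR ψ)) (.syn φ' (.parR ψ'))) : Conc ψ ψ' :=
  ⟨fun d => h.1 (.synSynR d.parR), fun d => h.2 (.synSynR d.parR)⟩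

end Conc

def SidewaysDiamond (X : Proc) (θ₁ : ELab) (X₁ : Proc) : Prop :=
  ∀ ⦃θ₂ : ELab⦄ ⦃Y : Proc⦄, Bwd X₁ θ₂ Y → Conc θ₁ θ₂ → ∃ X₂, Bwd X θ₂ X₂ ∧ Fwd X₂ θ₁ Y

section SidewaysDiamond

variable {a : Lab} {k : Key} {n : ℕ} {X X' Y Y' : Proc} {θ φ φ' : ELab}

theorem sidewaysDiamond_act (hX : X.std) :
    SidewaysDiamond (.pre a X) (.base a k) (.kpre a k X) := by
  intro θ₂ Y hb hc
  cases hb with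
  | act => exact absurd (Dep.base a k _) hc.2
  | pre hb => exact absurd hX hb.not_std_src

theorem sidewaysDiamond_pre (h : Fwd X θ X') (hk : θ.key ≠ k) (ih : SidewaysDiamond X θ X') :
    SidewaysDiamond (.kpre a k X) θ (.kpre a k X') := by
  intro θ₂ Y hb hc
  cases hb with
  | act hs => exact absurd hs h.not_std_tgt
  | pre hb hk₂ =>
      obtain ⟨X₂, hb₂, hf₂⟩ := ih hb hc
      exact ⟨_, hb₂.pre hk₂, hf₂.pre hk⟩

theorem sidewaysDiamond_res (hn₁ : θ.act ≠ .name n) (hn₂ : θ.act ≠ .coname n)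
    (ih : SidewaysDiamond X θ X') : SidewaysDiamond (X.res n) θ (X'.res n) := by
  intro θ₂ Y hb hc
  cases hb with
  | res hb hm₁ hm₂ =>
      obtain ⟨X₂, hb₂, hf₂⟩ := ih hb hc
      exact ⟨_, hb₂.res hm₁ hm₂, hf₂.res hn₁ hn₂⟩

theorem sidewaysDiamond_parL (h : Fwd X θ X') (hk : θ.key ∉ Y.keys)
    (ih : SidewaysDiamond X θ X') : SidewaysDiamond (X.par Y) (.parL θ) (X'.par Y) := by
  intro θ₂ Z hb hc
  cases hb with
  | parL hb hk₂ =>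
      obtain ⟨X₂, hb₂, hf₂⟩ := ih hb hc.of_parL
      exact ⟨_, hb₂.parL hk₂, hf₂.parL hk⟩
  | parR hb hk₂ =>
      exact ⟨_, hb.parR fun hm => hk₂ (h.keys_subset hm), h.parL fun hm => hk (hb.keys_subset hm)⟩
  | syn hbX hbY ha hco hkey =>
      obtain ⟨X₂, hb₂, hf₂⟩ := ih hbX hc.of_parL_syn
      exact ⟨_, .syn hb₂ hbY ha hco hkey, hf₂.parL fun hm => hk (hbY.keys_subset hm)⟩

theorem sidewaysDiamond_parR (h : Fwd Y θ Y') (hk : θ.key ∉ X.keys)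
    (ih : SidewaysDiamond Y θ Y') : SidewaysDiamond (X.par Y) (.parR θ) (X.par Y') := by
  intro θ₂ Z hb hc
  cases hb with
  | parR hb hk₂ =>
      obtain ⟨Y₂, hb₂, hf₂⟩ := ih hb hc.of_parR
      exact ⟨_, hb₂.parR hk₂, hf₂.parR hk⟩
  | parL hb hk₂ =>
      exact ⟨_, hb.parL fun hm => hk₂ (h.keys_subset hm), h.parR fun hm => hk (hb.keys_subset hm)⟩
  | syn hbX hbY ha hco hkey =>
      obtain ⟨Y₂, hb₂, hf₂⟩ := ih hbY hc.of_parR_syn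
      exact ⟨_, .syn hbX hb₂ ha hco hkey, hf₂.parR fun hm => hk (hbX.keys_subset hm)⟩

theorem sidewaysDiamond_syn (hX : Fwd X φ X') (hY : Fwd Y φ' Y') (ha : φ.act ≠ .tau)
    (hco : φ'.act = φ.act.co) (hkey : φ'.key = φ.key)
    (ihX : SidewaysDiamond X φ X') (ihY : SidewaysDiamond Y φ' Y') :
    SidewaysDiamond (X.par Y) (.syn (.parL φ) (.parR φ')) (X'.par Y') := by
  intro θ₂ Z hb hc
  cases hb with
  | parL hb hk₂ =>
      obtain ⟨X₂, hb₂, hf₂⟩ := ihX hb hc.symm.of_parL_syn.symm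
      exact ⟨_, hb₂.parL fun hm => hk₂ (hY.keys_subset hm), .syn hf₂ hY ha hco hkey⟩
  | parR hb hk₂ =>
      obtain ⟨Y₂, hb₂, hf₂⟩ := ihY hb hc.symm.of_parR_syn.symm
      exact ⟨_, hb₂.parR fun hm => hk₂ (hX.keys_subset hm), .syn hX hf₂ ha hco hkey⟩
  | syn hbX hbY ha₂ hco₂ hkey₂ =>
      obtain ⟨X₂, hbX₂, hfX₂⟩ := ihX hbX hc.of_syn_left
      obtain ⟨Y₂, hbY₂, hfY₂⟩ := ihY hbY hc.of_syn_right
      exact ⟨_, .syn hbX₂ hbY₂ ha₂ hco₂ hkey₂, .syn hfX₂ hfY₂ ha hco hkey⟩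

theorem sidewaysDiamond_sumL (h : Fwd X θ X') (hY : Y.std) (ih : SidewaysDiamond X θ X') :
    SidewaysDiamond (X.sum Y) θ (X'.sum Y) := by
  intro θ₂ Z hb hc
  cases hb with
  | sumL hb =>
      obtain ⟨X₂, hb₂, hf₂⟩ := ih hb hc
      exact ⟨_, hb₂.sumL hY, hf₂.sumL hY⟩
  | sumR _ hs => exact absurd hs h.not_std_tgt

theorem sidewaysDiamond_sumR (h : Fwd Y θ Y') (hX : X.std) (ih : SidewaysDiamond Y θ Y') :
    SidewaysDiamond (X.sum Y) θ (X.sum Y') := by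
  intro θ₂ Z hb hc
  cases hb with
  | sumR hb =>
      obtain ⟨Y₂, hb₂, hf₂⟩ := ih hb hc
      exact ⟨_, hb₂.sumR hX, hf₂.sumR hX⟩
  | sumL _ hs => exact absurd hs h.not_std_tgt

end SidewaysDiamond

theorem Fwd.sidewaysDiamond {X X' : Proc} {θ : ELab} (h : Fwd X θ X') :
    SidewaysDiamond X θ X' := by
  induction h with
  | act hX => exact sidewaysDiamond_act hX
  | pre h hk ih => exact sidewaysDiamond_pre h hk ih
  | res _ hn₁ hn₂ ih => exact sidewaysDiamond_res hn₁ hn₂ ih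
  | parL h hk ih => exact sidewaysDiamond_parL h hk ih
  | parR h hk ih => exact sidewaysDiamond_parR h hk ih
  | syn hX hY ha hco hkey ihX ihY => exact sidewaysDiamond_syn hX hY ha hco hkey ihX ihY
  | sumL h hY ih => exact sidewaysDiamond_sumL h hY ih
  | sumR h hX ih => exact sidewaysDiamond_sumR h hX ih

end CCSK

open CCSK in
/-- Sideways diamond. -/
theorem sideways_diamond : ∀ (X X₁ Y : Proc) (θ₁ θ₂ : ELab),
    Reachable X → Fwd X θ₁ X₁ → Bwd X₁ θ₂ Y → Conc θ₁ θ₂ →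
    ∃ X₂ : Proc, Bwd X θ₂ X₂ ∧ Fwd X₂ θ₁ Y := by
  intro X X₁ Y θ₁ θ₂ _ hf hb hc
  exact hf.sidewaysDiamond hb hc
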